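/- Let ε > 0 and δ > 0. In the extended Prisoner's Dilemma game with an 'extrovert' player 1 and an 'introvert' player 2 specified below, the mixed-strategy profile in which player 1 plays H_alone and H_together with probability 1/2 each and player 2 plays the pure strategy H_alone is a Nash equilibrium; under this profile the coalition {1,2} forms with probability 0 (the realized coalition structure is {{1},{2}} with probability 1), player 1's expected payoff is −2, and player 2's expected payoff is −2+δ. -/

import Mathlib

/-- The four pure strategies: Low/High activity, alone/together. -/
inductive S4 where
  | La  -- L_alone
  | Ha  -- H_alone
  | Lt  -- L_together
  | Ht  -- H_together
deriving DecidableEq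

instance : Fintype S4 where
  elems := {S4.La, S4.Ha, S4.Lt, S4.Ht}
  complete := by intro x; cases x <;> simp

open S4

/-- Whether a strategy is an H-strategy. -/
def high : S4 → Bool
  | Ha => true
  | Ht => true
  | _ => false

/-- Whether a strategy is a 'together' strategy. -/
def tog : S4 → Bool
  | Lt => true
  | Ht => true
  | _ => false

/-- Prisoner's Dilemma base payoff in L/H components. -/
def pdBase (mine other : Bool) : ℝ :=
  if mine then (if other then -2 else 3) else (if other then -5 else 0)

/-- Player 1 ('extrovert'): base payoff plus `ε` if the coalition `{1,2}`
forms, i.e. both chose a 'together' strategy. -/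
def u1 (ε : ℝ) (s1 s2 : S4) : ℝ :=
  pdBase (high s1) (high s2) + (if tog s1 = true ∧ tog s2 = true then ε else 0)

/-- Player 2 ('introvert'): base payoff plus `δ` if the coalition `{1,2}`
does not form. -/
def u2 (δ : ℝ) (s1 s2 : S4) : ℝ :=
  pdBase (high s2) (high s1) + (if ¬ (tog s1 = true ∧ tog s2 = true) then δ else 0)

/-- A mixed strategy: a probability vector over the four pure strategies. -/
def IsMix (σ : S4 → ℝ) : Prop := (∀ a, 0 ≤ σ a) ∧ (∑ a, σ a) = 1

/-- Expected payoff under the product distribution. -/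
noncomputable def EU (u : S4 → S4 → ℝ) (σ1 σ2 : S4 → ℝ) : ℝ :=
  ∑ a, ∑ b, u a b * σ1 a * σ2 b

/-- Player 1's equilibrium mixed strategy: `H_alone` and `H_together` with
probability `1/2` each. -/
noncomputable def σ1star : S4 → ℝ
  | Ha => 1 / 2
  | Ht => 1 / 2
  | _ => 0

/-- Player 2's equilibrium (pure) strategy: `H_alone` with probability 1. -/
noncomputable def σ2star : S4 → ℝ
  | Ha => 1
  | _ => 0

/-!
Against player 2's pure `H_alone` no coalition can form, so player 1 faces the plain Prisoner's
Dilemma and every H-strategy earns the best possible `-2`; both strategies in the support of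
`σ1star` are therefore best responses. Against `σ1star`, player 2's H-strategies earn `-2` and
`H_alone` additionally collects the full bonus `δ`, while `H_together` forfeits it half of the
time. Expected payoffs are linear in a player's own mixed strategy, so checking pure deviations
suffices.
-/

theorem sum_S4 {M : Type*} [AddCommMonoid M] (f : S4 → M) :
    ∑ a, f a = f La + f Ha + f Lt + f Ht := by
  rw [show (Finset.univ : Finset S4) = {La, Ha, Lt, Ht} from rfl]
  simp [add_assoc]

namespace IsMix

variable {τ f : S4 → ℝ} {M : ℝ}

theorem sum_mul_le (hτ : IsMix τ) (h : ∀ a, f a ≤ M) : ∑ a, τ a * f a ≤ M :=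
  calc ∑ a, τ a * f a ≤ ∑ a, τ a * M :=
        Finset.sum_le_sum fun a _ => mul_le_mul_of_nonneg_left (h a) (hτ.1 a)
    _ = M := by rw [← Finset.sum_mul, hτ.2, one_mul]

theorem sum_mul_eq (hτ : IsMix τ) (h : ∀ a, τ a ≠ 0 → f a = M) : ∑ a, τ a * f a = M :=
  calc ∑ a, τ a * f a = ∑ a, τ a * M := by
        refine Finset.sum_congr rfl fun a _ => ?_
        by_cases ha : τ a = 0
        · simp [ha]
        · rw [h a ha]
    _ = M := by rw [← Finset.sum_mul, hτ.2, one_mul]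

end IsMix

theorem EU_eq_sum_left (u : S4 → S4 → ℝ) (τ σ : S4 → ℝ) :
    EU u τ σ = ∑ a, τ a * ∑ b, u a b * σ b := by
  simp only [EU, Finset.mul_sum]
  exact Finset.sum_congr rfl fun a _ => Finset.sum_congr rfl fun b _ => by ring

theorem EU_eq_sum_right (u : S4 → S4 → ℝ) (σ τ : S4 → ℝ) :
    EU u σ τ = ∑ b, τ b * ∑ a, u a b * σ a := by
  rw [EU, Finset.sum_comm]
  simp only [Finset.mul_sum]
  exact Finset.sum_congr rfl fun b _ => Finset.sum_congr rfl fun a _ => by ring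

theorem isMix_σ1star : IsMix σ1star :=
  ⟨fun a => by cases a <;> norm_num [σ1star], by rw [sum_S4]; norm_num [σ1star]⟩

theorem isMix_σ2star : IsMix σ2star :=
  ⟨fun a => by cases a <;> norm_num [σ2star], by rw [sum_S4]; norm_num [σ2star]⟩

theorem u1_payoff_against_σ2star (ε : ℝ) (a : S4) :
    ∑ b, u1 ε a b * σ2star b = if high a then -2 else -5 := by
  cases a <;> norm_num [sum_S4, u1, pdBase, σ2star, high, tog]

theorem u2_payoff_against_σ1star (δ : ℝ) (b : S4) :
    ∑ a, u2 δ a b * σ1star a = pdBase (high b) true + if tog b then δ / 2 else δ := by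
  cases b <;> norm_num [sum_S4, u2, pdBase, σ1star, high, tog] <;> ring

theorem coalition_prob_σstar :
    (∑ a, ∑ b, (if tog a = true ∧ tog b = true then σ1star a * σ2star b else 0)) = 0 := by
  simp [sum_S4, σ1star, σ2star, tog]

theorem EU_u1_σstar (ε : ℝ) : EU (u1 ε) σ1star σ2star = -2 := by
  rw [EU_eq_sum_left]
  refine isMix_σ1star.sum_mul_eq fun a ha => ?_
  cases a <;> simp_all [u1_payoff_against_σ2star, σ1star, high]

theorem EU_u2_σstar (δ : ℝ) : EU (u2 δ) σ1star σ2star = -2 + δ := by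
  rw [EU_eq_sum_right]
  refine isMix_σ2star.sum_mul_eq fun b hb => ?_
  cases b <;> simp_all [u2_payoff_against_σ1star, σ2star, pdBase, high, tog]

theorem mixed_extrovert_introvert_equilibrium_general (ε δ : ℝ) (hδ : 0 < δ) :
    IsMix σ1star ∧ IsMix σ2star ∧
    (∀ τ, IsMix τ → EU (u1 ε) τ σ2star ≤ EU (u1 ε) σ1star σ2star) ∧
    (∀ τ, IsMix τ → EU (u2 δ) σ1star τ ≤ EU (u2 δ) σ1star σ2star) ∧
    (∑ a, ∑ b, (if tog a = true ∧ tog b = true then σ1star a * σ2star b else 0)) = 0 ∧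
    EU (u1 ε) σ1star σ2star = -2 ∧
    EU (u2 δ) σ1star σ2star = -2 + δ := by
  refine ⟨isMix_σ1star, isMix_σ2star, fun τ hτ => ?_, fun τ hτ => ?_, coalition_prob_σstar,
    EU_u1_σstar ε, EU_u2_σstar δ⟩
  · rw [EU_eq_sum_left, EU_u1_σstar]
    refine hτ.sum_mul_le fun a => ?_
    rw [u1_payoff_against_σ2star]
    split_ifs <;> norm_num
  · rw [EU_eq_sum_right, EU_u2_σstar]
    refine hτ.sum_mul_le fun b => ?_
    rw [u2_payoff_against_σ1star]
    cases b <;> norm_num [pdBase, high, tog] <;> linarith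

/-- For `ε, δ > 0`, in the mixed extrovert/introvert extended Prisoner's
Dilemma, the profile where player 1 mixes `H_alone`/`H_together` with equal
probabilities and player 2 plays `H_alone` is a Nash equilibrium; the coalition
`{1,2}` forms with probability 0, player 1's expected payoff is `-2`, and
player 2's expected payoff is `-2+δ`. -/
theorem mixed_extrovert_introvert_equilibrium (ε δ : ℝ) (hε : 0 < ε) (hδ : 0 < δ) :
    IsMix σ1star ∧ IsMix σ2star ∧
    (∀ τ, IsMix τ → EU (u1 ε) τ σ2star ≤ EU (u1 ε) σ1star σ2star) ∧
    (∀ τ, IsMix τ → EU (u2 δ) σ1star τ ≤ EU (u2 δ) σ1star σ2star) ∧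
    (∑ a, ∑ b, (if tog a = true ∧ tog b = true then σ1star a * σ2star b else 0)) = 0 ∧
    EU (u1 ε) σ1star σ2star = -2 ∧
    EU (u2 δ) σ1star σ2star = -2 + δ :=
  mixed_extrovert_introvert_equilibrium_general ε δ hδ
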